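/- Let (R, 𝔪, k) be a commutative Noetherian local ring and let E = E_R(k) be the injective hull of the residue field. Then the annihilator in E of the socle ideal (0 :_R 𝔪) equals 𝔪E; that is, (0 :_E (0 :_R 𝔪)) = 𝔪E. -/

import Mathlib

open CategoryTheory Limits MonoidalCategory

noncomputable section

set_option maxHeartbeats 1000000
set_option synthInstance.maxHeartbeats 1000000

namespace FrobeniusFlat

/-! ### Monoidal structure on `ℤ`-indexed cochain complexes of modules -/

section MonoidalInstances

variable (R : Type) [CommRing R]

instance (X : ModuleCat R) :
    PreservesColimitsOfSize.{0, 0} ((curriedTensor (ModuleCat R)).obj X) :=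
  inferInstanceAs (PreservesColimitsOfSize.{0, 0} (tensorLeft X))

instance (X : ModuleCat R) :
    PreservesColimitsOfSize.{0, 0} ((curriedTensor (ModuleCat R)).flip.obj X) :=
  preservesColimits_of_natIso
    (NatIso.ofComponents (fun Y => β_ X Y) (by intros; simp) :
      tensorLeft X ≅ (curriedTensor (ModuleCat R)).flip.obj X)

instance : (curriedTensor (ModuleCat R)).Additive where
  map_add := by
    intros
    ext Z : 2
    exact MonoidalPreadditive.add_whiskerRight ..

instance (X : ModuleCat R) : ((curriedTensor (ModuleCat R)).obj X).Additive :=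
  inferInstanceAs (tensorLeft X).Additive

end MonoidalInstances

/-- `ℤ`-indexed cochain complexes of `R`-modules.  A homologically indexed complex
`M_*` is regarded as a cochain complex via `Mⁿ := M_{-n}`, so that the `i`-th
homology `H_i` of a homologically indexed complex is `homology (-i)` of the
corresponding cochain complex. -/
abbrev Cx (R : Type) [CommRing R] := CochainComplex (ModuleCat R) ℤ

variable {R : Type} [CommRing R]

/-- A complex is acyclic if all of its homology vanishes. -/
def Acyclic (Z : Cx R) : Prop := ∀ i : ℤ, IsZero (Z.homology i)

/-- Two complexes are isomorphic in the derived category iff they are connected by a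
roof of quasi-isomorphisms. -/
def DerivedIso (F M : Cx R) : Prop :=
  ∃ (Z : Cx R) (s : Z ⟶ F) (t : Z ⟶ M), QuasiIso s ∧ QuasiIso t

/-- A semi-flat (K-flat and degreewise flat) complex. -/
def SemiFlat (F : Cx R) : Prop :=
  (∀ i : ℤ, Module.Flat R (F.X i)) ∧
    ∀ Z : Cx R, Acyclic Z → Acyclic (F ⊗ Z)

/-- A semi-projective (K-projective and degreewise projective) complex. -/
def SemiProjective (P : Cx R) : Prop :=
  (∀ i : ℤ, Projective (P.X i)) ∧
    ∀ Z : Cx R, Acyclic Z → ∀ g : P ⟶ Z, Nonempty (Homotopy g 0)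

/-- A semi-injective (K-injective and degreewise injective) complex. -/
def SemiInjective (I : Cx R) : Prop :=
  (∀ i : ℤ, Injective (I.X i)) ∧
    ∀ Z : Cx R, Acyclic Z → ∀ g : Z ⟶ I, Nonempty (Homotopy g 0)

/-- `fd_R M ≤ n` : there is a semi-flat resolution of `M` concentrated in
homological degrees `≤ n`, i.e. cohomological degrees `≥ -n`. -/
def FlatDimLE (M : Cx R) (n : ℤ) : Prop :=
  ∃ F : Cx R, SemiFlat F ∧ DerivedIso F M ∧ ∀ j : ℤ, j < -n → IsZero (F.X j)

/-- `M` has finite flat dimension. -/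
def HasFiniteFlatDimension (M : Cx R) : Prop := ∃ n : ℤ, FlatDimLE M n

/-- `id_R M ≤ n` : there is a semi-injective resolution of `M` concentrated in
cohomological degrees `≤ n`. -/
def InjDimLE (M : Cx R) (n : ℤ) : Prop :=
  ∃ I : Cx R, SemiInjective I ∧ DerivedIso M I ∧ ∀ j : ℤ, n < j → IsZero (I.X j)

/-- `M` has finite injective dimension. -/
def HasFiniteInjectiveDimension (M : Cx R) : Prop := ∃ n : ℤ, InjDimLE M n

/-- `H_*(M)` (homologically indexed) vanishes in all degrees `i ≥ t`; that is,
`t > sup H_*(M)`. -/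
def SupHomologyLT (M : Cx R) (t : ℤ) : Prop :=
  ∀ i : ℤ, t ≤ i → IsZero (M.homology (-i))

/-- `H^*(M)` (cohomologically indexed) vanishes in all degrees `i ≥ t`; that is,
`t > sup H^*(M)`. -/
def SupCohomologyLT (M : Cx R) (t : ℤ) : Prop :=
  ∀ i : ℤ, t ≤ i → IsZero (M.homology i)

/-- The homology `H_*(M)` of a homologically indexed complex is bounded above. -/
def HomologyBoundedAbove (M : Cx R) : Prop := ∃ t : ℤ, SupHomologyLT M t

/-- The cohomology `H^*(M)` of a cohomologically indexed complex is bounded above. -/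
def CohomologyBoundedAbove (M : Cx R) : Prop := ∃ t : ℤ, SupCohomologyLT M t

/-- The `R`-module `ᵉR` : the ring `R` viewed as a module over itself via the `e`-th
iterate of the Frobenius endomorphism, so `r • s = r^(pᵉ) * s`. -/
def frobModule (R : Type) [CommRing R] (p : ℕ) [Fact p.Prime] [CharP R p] (e : ℕ) :
    ModuleCat R :=
  (ModuleCat.restrictScalars (iterateFrobenius R p e)).obj (ModuleCat.of R R)

/-- `R` is F-finite : `ᵉR` is a finitely generated `R`-module (for `e = 1`,
equivalently for every `e`). -/
def FFinite (R : Type) [CommRing R] (p : ℕ) [Fact p.Prime] [CharP R p] : Prop :=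
  Module.Finite R ↥(frobModule R p 1)

/-- A projective resolution of a module, embedded as a `ℤ`-indexed cochain complex
concentrated in cohomological degrees `≤ 0`.  This is a semi-flat and semi-projective
complex quasi-isomorphic to the module. -/
def resolutionCx {N : ModuleCat R} (P : ProjectiveResolution N) : Cx R :=
  P.complex.extend ComplexShape.embeddingDownNat

/-- `Tor_i^R(N, M) = 0`, for a module `N` and a complex `M` : the homology in
homological degree `i` (cohomological degree `-i`) of `P ⊗_R M` vanishes, where `P`
is any projective resolution of `N`. -/
def TorVanishes (N : ModuleCat R) (M : Cx R) (i : ℤ) : Prop :=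
  ∀ P : ProjectiveResolution N, IsZero ((resolutionCx P ⊗ M).homology (-i))

open CochainComplex.HomComplex in
/-- The `R`-module-valued Hom-complex `Hom_R(F, G)` of two complexes. -/
def homCx (F G : Cx R) : Cx R where
  X i := ModuleCat.of R (Cochain F G i)
  d i j := ModuleCat.ofHom (δ_hom R F G i j)
  shape i j hij := ModuleCat.hom_ext (LinearMap.ext fun z => δ_shape i j hij z)
  d_comp_d' i j k _ _ := ModuleCat.hom_ext (LinearMap.ext fun z => δ_δ i j k z)

/-- `Ext^i_R(N, M) = 0`, for a module `N` and a complex `M` : the `i`-th cohomology of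
`Hom_R(P, M)` vanishes, where `P` is any projective resolution of `N`. -/
def ExtVanishes (N : ModuleCat R) (M : Cx R) (i : ℤ) : Prop :=
  ∀ P : ProjectiveResolution N, IsZero ((homCx (resolutionCx P) M).homology i)

/-- A module viewed as a complex concentrated in (co)homological degree `0`. -/
def singleCx (N : ModuleCat R) : Cx R :=
  (HomologicalComplex.single (ModuleCat R) (ComplexShape.up ℤ) 0).obj N

/-- Base change of a complex along a ring homomorphism `f : R →+* S`,
i.e. `M ⊗_R S` as a complex of `S`-modules. -/
def extendCx {R S : Type} [CommRing R] [CommRing S] (f : R →+* S) (M : Cx R) : Cx S :=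
  ((ModuleCat.extendScalars f).mapHomologicalComplex (ComplexShape.up ℤ)).obj M

/-- Restriction of scalars of a complex along a ring homomorphism `f : R →+* S`. -/
def restrictCx {R S : Type} [CommRing R] [CommRing S] (f : R →+* S) (M : Cx S) : Cx R :=
  ((ModuleCat.restrictScalars f).mapHomologicalComplex (ComplexShape.up ℤ)).obj M

/-- `T` is (a model of) `Tor_i^R(L, M)` for complexes `L`, `M` : it is the homology in
homological degree `i` of `F ⊗_R M` for some semi-flat resolution `F` of `L`. -/
def IsTorOf (L M : Cx R) (i : ℤ) (T : ModuleCat R) : Prop :=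
  ∃ F : Cx R, SemiFlat F ∧ DerivedIso F L ∧ Nonempty (T ≅ (F ⊗ M).homology (-i))

/-- `E` is (a model of) `Ext^i_R(L, M)` for complexes `L`, `M` : it is the `i`-th
cohomology of `Hom_R(P, M)` for some semi-projective resolution `P` of `L`. -/
def IsExtOf (L M : Cx R) (i : ℤ) (E : ModuleCat R) : Prop :=
  ∃ P : Cx R, SemiProjective P ∧ DerivedIso P L ∧ Nonempty (E ≅ (homCx P M).homology i)

/-- `T` is (a model of) `Tor_i^A(M, N)`, with its natural module structure over the
ring `C` of the second argument : for an `A`-complex `M` and a `C`-complex `N`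
(restricted to `A` along `f : A →+* C`), it is the homology in homological degree `i`
of `N ⊗_C (C ⊗_A F) ≅ N ⊗_A F` for some semi-flat resolution `F` of `M` over `A`. -/
def IsTorMixed {A C : Type} [CommRing A] [CommRing C] (f : A →+* C)
    (M : Cx A) (N : Cx C) (i : ℤ) (T : ModuleCat C) : Prop :=
  ∃ F : Cx A, SemiFlat F ∧ DerivedIso F M ∧
    Nonempty (T ≅ (N ⊗ extendCx f F).homology (-i))

/-- `T` is (a model of) `Tor_i^R(M, ᵉR)`, with its natural `ᵉR`-module structure :
it is the homology in homological degree `i` of `ᵉR ⊗_R F` (extension of scalars of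
`F` along `fᵉ : R → ᵉR`, which is the `e`-th Frobenius iterate on the underlying
ring `R` of `ᵉR`) for some semi-flat resolution `F` of `M`. -/
def IsTorFrobTwisted (R : Type) [CommRing R] (p : ℕ) [Fact p.Prime] [CharP R p] (e : ℕ)
    (M : Cx R) (i : ℤ) (T : ModuleCat R) : Prop :=
  ∃ F : Cx R, SemiFlat F ∧ DerivedIso F M ∧
    Nonempty (T ≅ (extendCx (iterateFrobenius R p e) F).homology (-i))

/-- `E` is (a model of) `Ext^i_R(ᵉR, M)`, with its natural `ᵉR`-module structure :
it is the `i`-th cohomology of `Hom_R(ᵉR, J)` (coextension of scalars of `J` along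
`fᵉ : R → ᵉR`) for some semi-injective resolution `J` of `M`. -/
def IsExtFrobTwisted (R : Type) [CommRing R] (p : ℕ) [Fact p.Prime] [CharP R p] (e : ℕ)
    (M : Cx R) (i : ℤ) (E : ModuleCat R) : Prop :=
  ∃ J : Cx R, SemiInjective J ∧ DerivedIso M J ∧
    Nonempty (E ≅ (((ModuleCat.coextendScalars (iterateFrobenius R p e)).mapHomologicalComplex
      (ComplexShape.up ℤ)).obj J).homology i)

open IsLocalRing

/-- A Noetherian local ring is Cohen–Macaulay if there is a regular sequence in the
maximal ideal whose length equals the Krull dimension of the ring. -/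
def IsCohenMacaulayLocalRing (R : Type) [CommRing R] [IsLocalRing R] : Prop :=
  ∃ rs : List R, (∀ x ∈ rs, x ∈ maximalIdeal R) ∧
    RingTheory.Sequence.IsRegular R rs ∧ (rs.length : WithBot ℕ∞) = ringKrullDim R

/-- The length `λ(M)` of a module, as the Krull dimension of its submodule lattice. -/
def length (R : Type) [CommRing R] (M : Type) [AddCommGroup M] [Module R M] :
    WithBot ℕ∞ :=
  Order.krullDim (Submodule R M)

/-- Interpret a length as a real number (with junk value `0` at `±∞`). -/
def lengthToReal (x : WithBot ℕ∞) : ℝ := ((WithBot.unbotD 0 x).toNat : ℝ)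

/-- The Hilbert–Samuel multiplicity `e(R)` of a `d`-dimensional local ring `R` with
respect to its maximal ideal, as the limit of `d! · λ(R/𝔪ⁿ)/nᵈ`. -/
def hilbertSamuelMultiplicity (R : Type) [CommRing R] [IsLocalRing R] (d : ℕ) : ℝ :=
  Filter.limUnder Filter.atTop fun n : ℕ =>
    (d.factorial : ℝ) * lengthToReal (length R (R ⧸ (maximalIdeal R ^ n))) / (n : ℝ) ^ d

/-- A regular local ring : a Noetherian local ring whose maximal ideal is generated
by `dim R` elements. -/
def IsRegularLocalRing (Q : Type) [CommRing Q] [IsLocalRing Q] : Prop :=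
  IsNoetherianRing Q ∧
    ∃ s : Finset Q, Ideal.span (s : Set Q) = maximalIdeal Q ∧
      (s.card : WithBot ℕ∞) = ringKrullDim Q

/-- A presentation of the `𝔪`-adic completion of `R` as a quotient of a complete
regular local ring by a regular sequence. -/
structure CompleteIntersectionPresentation (R : Type) [CommRing R] [IsLocalRing R] where
  /-- the complete regular local ring -/
  Q : Type
  [commRing : CommRing Q]
  [localRing : IsLocalRing Q]
  regular : IsRegularLocalRing Q
  complete : IsAdicComplete (maximalIdeal Q) Q
  /-- the regular sequence -/
  rs : List Q
  mem_max : ∀ x ∈ rs, x ∈ maximalIdeal Q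
  isRegSeq : RingTheory.Sequence.IsRegular Q rs
  /-- the presentation of the completion of `R` -/
  equiv : AdicCompletion (maximalIdeal R) R ≃+* (Q ⧸ Ideal.span {x | x ∈ rs})

/-- `R` is a local complete intersection : its `𝔪`-adic completion is the quotient of
a complete regular local ring by a regular sequence. -/
def IsCompleteIntersectionLocalRing (R : Type) [CommRing R] [IsLocalRing R] : Prop :=
  Nonempty (CompleteIntersectionPresentation R)

end FrobeniusFlat

/-! If `𝔪 = (x₁, …, xₙ)`, the kernel of `R → Rⁿ, t ↦ (t xᵢ)ᵢ` is `(0 :_R 𝔪)`. Hence for `y ∈ E`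
killed by `(0 :_R 𝔪)` the map `t ↦ t y` factors through this map, and injectivity of `E` extends
it to some `G : Rⁿ → E`. Then `y = G (x₁, …, xₙ) = ∑ xᵢ G(eᵢ) ∈ 𝔪E`. The reverse inclusion
`𝔪E ⊆ (0 :_E (0 :_R 𝔪))` holds in every module. -/

open Submodule in
theorem LinearMap.ker_pi_toSpanSingleton {R M ι : Type*} [CommSemiring R] [AddCommMonoid M]
    [Module R M] (x : ι → M) :
    ker (pi fun i ↦ toSpanSingleton R M (x i)) = (span R (Set.range x)).annihilator := by
  ext r
  simp [mem_annihilator_span, funext_iff]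

universe u v in
theorem Module.Injective.exists_comp_eq_of_ker_le {R : Type u} [Ring R] {E : Type v}
    {A B : Type*} [AddCommGroup E] [Module R E] [Small.{v} R] [Module.Injective R E]
    [AddCommGroup A] [Module R A] [AddCommGroup B] [Module R B]
    (ψ : A →ₗ[R] B) (g : A →ₗ[R] E) (h : LinearMap.ker ψ ≤ LinearMap.ker g) :
    ∃ G : B →ₗ[R] E, G ∘ₗ ψ = g := by
  let g' := (LinearMap.ker ψ).liftQ g h ∘ₗ (LinearMap.quotKerEquivRange ψ).symm.toLinearMap
  obtain ⟨G, hG⟩ := Module.Injective.extension_property R E _ _ (LinearMap.range ψ).subtype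
    (Submodule.injective_subtype _) g'
  refine ⟨G, LinearMap.ext fun a ↦ ?_⟩
  have hGa := LinearMap.congr_fun hG ⟨ψ a, LinearMap.mem_range_self ψ a⟩
  simp only [LinearMap.coe_comp, Function.comp_apply, Submodule.coe_subtype] at hGa
  rw [LinearMap.comp_apply, hGa]
  simp only [g', LinearMap.coe_comp, Function.comp_apply, LinearEquiv.coe_coe]
  rw [LinearMap.quotKerEquivRange_symm_apply_image, Submodule.mkQ_apply, Submodule.liftQ_apply]

theorem Submodule.smul_top_le_torsionBySet_annihilator {R M : Type*} [CommSemiring R]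
    [AddCommMonoid M] [Module R M] (I : Ideal R) :
    I • (⊤ : Submodule R M) ≤ torsionBySet R M (I.annihilator : Set R) := by
  refine smul_le.mpr fun r hr m _ ↦ (mem_torsionBySet_iff _ _).mpr ?_
  rintro ⟨a, ha⟩
  rw [← smul_assoc, mem_annihilator.mp ha r hr, zero_smul]

open Submodule in
universe u v in
theorem Module.Injective.torsionBySet_annihilator_eq_smul_top {R : Type u} {E : Type v}
    [CommRing R] [AddCommGroup E] [Module R E] [Small.{v} R] [Module.Injective R E]
    {I : Ideal R} (hI : I.FG) : torsionBySet R E (I.annihilator : Set R) = I • ⊤ := by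
  refine le_antisymm (fun y hy ↦ ?_) (smul_top_le_torsionBySet_annihilator I)
  obtain ⟨n, x, hx⟩ := fg_iff_exists_fin_generating_family.mp hI
  let ψ := LinearMap.pi fun i ↦ LinearMap.toSpanSingleton R R (x i)
  have hker : LinearMap.ker ψ ≤ LinearMap.ker (LinearMap.toSpanSingleton R E y) := by
    rw [LinearMap.ker_pi_toSpanSingleton, hx]
    exact fun a ha ↦ (mem_torsionBySet_iff _ y).mp hy ⟨a, ha⟩
  obtain ⟨G, hG⟩ := Module.Injective.exists_comp_eq_of_ker_le ψ _ hker
  have hψ : ψ 1 = x := funext fun i ↦ one_smul R (x i)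
  have hy : y = G x := by
    rw [← hψ, ← LinearMap.comp_apply, hG, LinearMap.toSpanSingleton_apply, one_smul]
  classical
  rw [hy, pi_eq_sum_univ x, map_sum]
  exact sum_mem fun i _ ↦ map_smul G (x i) _ ▸
    smul_mem_smul (hx ▸ subset_span (Set.mem_range_self i)) mem_top

namespace FrobeniusFlat

theorem annihilator_socle_eq_max_smul_injective_hull_general
    (R : Type) [CommRing R] [IsNoetherianRing R] [IsLocalRing R]
    (E : Type) [AddCommGroup E] [Module R E]
    (hEinj : Module.Injective R E) :
    Submodule.torsionBySet R E
        (((⊥ : Submodule R R).colon (IsLocalRing.maximalIdeal R) : Ideal R) : Set R)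
      = IsLocalRing.maximalIdeal R • (⊤ : Submodule R E) := by
  rw [Submodule.bot_colon]
  exact Module.Injective.torsionBySet_annihilator_eq_smul_top (IsNoetherian.noetherian _)

/-- Lemma 4.1.
Let `(R, 𝔪, k)` be a commutative Noetherian local ring and let `E = E_R(k)` be the
injective hull of the residue field (an injective module which is an essential
extension of `k`).  Then the annihilator in `E` of the socle ideal `(0 :_R 𝔪)` equals
`𝔪E`; that is, `(0 :_E (0 :_R 𝔪)) = 𝔪E`. -/
theorem annihilator_socle_eq_max_smul_injective_hull
    (R : Type) [CommRing R] [IsNoetherianRing R] [IsLocalRing R]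
    (E : Type) [AddCommGroup E] [Module R E]
    (hEinj : Module.Injective R E)
    (f : IsLocalRing.ResidueField R →ₗ[R] E) (hf : Function.Injective f)
    (hess : ∀ N : Submodule R E, N ⊓ LinearMap.range f = ⊥ → N = ⊥) :
    Submodule.torsionBySet R E
        (((⊥ : Submodule R R).colon (IsLocalRing.maximalIdeal R) : Ideal R) : Set R)
      = IsLocalRing.maximalIdeal R • (⊤ : Submodule R E) :=
  annihilator_socle_eq_max_smul_injective_hull_general R E hEinj

end FrobeniusFlat

end
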